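/- Define the 2×2 polynomial matrix M_r^L = [[A_r^L, B_r^L],[A_{r−1}^L, B_{r−1}^L]] of shifted Legendre coefficients. Then for all r, s ≥ 0 and all L, the composition rule M_{r+s}^L = M_s^{L+r} · M_r^L holds. -/
import Mathlib


open Polynomial

/-- Legendre polynomials via the three-term recurrence
`(n+1)P_{n+1} = (2n+1)x P_n − n P_{n−1}`, `P_0 = 1`, `P_1 = x`. -/
noncomputable def legP : ℕ → Polynomial ℝ
  | 0 => 1
  | 1 => X
  | (n + 2) =>
      C ((2 * n + 3 : ℝ) / (n + 2)) * X * legP (n + 1)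
        - C ((n + 1 : ℝ) / (n + 2)) * legP n

/-- The pair `(A_{r}^L, B_{r}^L)` of shifted Legendre coefficients, indexed with an
offset of one so that index `0` corresponds to `r = -1` (values `(0,1)`) and index
`r+1` corresponds to `r` (so index `1` is `(A_0, B_0) = (1,0)`). -/
noncomputable def shiftAB (L : ℕ) : ℕ → Polynomial ℝ × Polynomial ℝ
  | 0 => (0, 1)
  | 1 => (1, 0)
  | (n + 2) =>
      (C ((2 * L + 2 * n + 1 : ℝ) / (L + n + 1)) * X * (shiftAB L (n + 1)).1
          - C ((L + n : ℝ) / (L + n + 1)) * (shiftAB L n).1,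
       C ((2 * L + 2 * n + 1 : ℝ) / (L + n + 1)) * X * (shiftAB L (n + 1)).2
          - C ((L + n : ℝ) / (L + n + 1)) * (shiftAB L n).2)

/-- `A_r^L`. -/
noncomputable def Acoef (L r : ℕ) : Polynomial ℝ := (shiftAB L (r + 1)).1

/-- `B_r^L`. -/
noncomputable def Bcoef (L r : ℕ) : Polynomial ℝ := (shiftAB L (r + 1)).2

/-- The matrix `M_r^L = [[A_r^L, B_r^L], [A_{r−1}^L, B_{r−1}^L]]`. -/
noncomputable def Mmat (L r : ℕ) : Matrix (Fin 2) (Fin 2) (Polynomial ℝ) :=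
  !![(shiftAB L (r + 1)).1, (shiftAB L (r + 1)).2;
     (shiftAB L r).1, (shiftAB L r).2]

noncomputable def stepMat (L n : ℕ) : Matrix (Fin 2) (Fin 2) (Polynomial ℝ) :=
  !![C ((2 * L + 2 * n + 1 : ℝ) / (L + n + 1)) * X, -C ((L + n : ℝ) / (L + n + 1)); 1, 0]

lemma Mmat_step (L n : ℕ) : Mmat L (n + 1) = stepMat L n * Mmat L n := by
  simp only [Mmat, stepMat, shiftAB]
  ext i j
  fin_cases i <;> fin_cases j <;>
    simp [Matrix.mul_apply, Fin.sum_univ_succ] <;> ring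

lemma stepMat_shift (L r s : ℕ) : stepMat (L + r) s = stepMat L (r + s) := by
  simp only [stepMat]
  push_cast
  ring_nf

theorem Mmat_composition :
    ∀ (L r s : ℕ), Mmat L (r + s) = Mmat (L + r) s * Mmat L r := by
  intro L r s
  induction s with
  | zero =>
    have : Mmat (L + r) 0 = 1 := by
      simp [Mmat, shiftAB]
      ext i j
      fin_cases i <;> fin_cases j <;> simp [shiftAB, Matrix.one_apply]
    simp [this]
  | succ s ih =>
    have h1 : r + (s + 1) = (r + s) + 1 := by ring
    rw [h1, Mmat_step, ih, Mmat_step, stepMat_shift, Matrix.mul_assoc]
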